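/- arXiv:1007.0316 — 4 statements merged into one kernel-verified Lean document; each statement's English description precedes it below -/
import Mathlib

section
/- Let M and N be matroids on E, and let M ∨ N be the matroid whose independent sets are all unions I ∪ J of an independent set I of M and an independent set J of N. Then the rank of any X ⊆ E in M ∨ N equals min over T ⊆ X of (|X \ T| + r_M(T) + r_N(T)). -/
/-!
Splitting an independent set `I ∪ J` of the union along `T ⊆ X` gives
`|I ∪ J| ≤ |X \ T| + r_M(T) + r_N(T)`. For the reverse inequality induct on the finite set `X`.
To add an element `x`, apply the induction hypothesis to `(M ／ x, N)` and to `(M, N ／ x)`, with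
witnesses `S` and `T`, and lift both independent unions back by a basis of `{x}`. Submodularity
of `r_M` and `r_N` bounds the sum of the values at `insert x (S ∪ T)` and at `S ∩ T` by the sum
of the two lifted sizes plus one, so one of these two sets is a witness for the larger lift.
-/

/-- The rank of a set `X` in a matroid `M`: the size of a maximal independent subset of `X`. -/
noncomputable def mrank {α : Type*} (M : Matroid α) (X : Set α) : ℕ :=
  sSup {n | ∃ I, I ⊆ X ∧ M.Indep I ∧ I.ncard = n}

open Set Matroid

namespace Matroid

variable {α : Type*} {C X : Set α}

lemma eRk_contract_add_eRk (M : Matroid α) (hXC : Disjoint X C) :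
    (M ／ C).eRk X + M.eRk C = M.eRk (X ∪ C) := by
  obtain ⟨K, hK⟩ := M.exists_isBasis' C
  obtain ⟨I, hI, hKI⟩ :=
    hK.indep.subset_isBasis'_of_subset (hK.subset.trans subset_union_right)
  have hIC : I ∩ C = K := (hK.eq_of_subset_indep (hI.indep.inter_right C)
    (subset_inter hKI hK.subset) inter_subset_right).symm
  have hIX : (M ／ C).IsBasis' (I \ C) X := by
    have h := hI.contract_isBasis' hK (hI.indep.subset (union_subset sdiff_subset hKI))
    rwa [union_sdiff_right, hXC.sdiff_eq_left] at h
  rw [← hIX.encard_eq_eRk, ← hK.encard_eq_eRk, ← hI.encard_eq_eRk, ← hIC,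
    encard_sdiff_add_encard_inter]

end Matroid

section mrank

variable {α : Type*} {M : Matroid α} {I J S T X Y : Set α} {x : α}

lemma Matroid.IsBasis'.mrank_eq_ncard (hX : X.Finite) (hI : M.IsBasis' I X) :
    mrank M X = I.ncard := by
  refine IsGreatest.csSup_eq ⟨⟨I, hI.subset, hI.indep, rfl⟩, ?_⟩
  rintro _ ⟨J, hJX, hJ, rfl⟩
  have h := hJ.encard_le_eRk_of_subset hJX
  rw [← hI.encard_eq_eRk, ← (hX.subset hJX).cast_ncard_eq,
    ← (hX.subset hI.subset).cast_ncard_eq] at h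
  exact_mod_cast h

lemma cast_mrank (M : Matroid α) (hX : X.Finite) : (mrank M X : ℕ∞) = M.eRk X := by
  obtain ⟨I, hI⟩ := M.exists_isBasis' X
  rw [hI.mrank_eq_ncard hX, (hX.subset hI.subset).cast_ncard_eq, hI.encard_eq_eRk]

lemma mrank_empty (M : Matroid α) : mrank M ∅ = 0 := by
  exact_mod_cast (cast_mrank M finite_empty).trans M.eRk_empty

lemma Matroid.Indep.ncard_le_mrank (hX : X.Finite) (hI : M.Indep I) (hIX : I ⊆ X) :
    I.ncard ≤ mrank M X := by
  have h := hI.encard_le_eRk_of_subset hIX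
  rw [← (hX.subset hIX).cast_ncard_eq, ← cast_mrank M hX] at h
  exact_mod_cast h

lemma mrank_union_add_mrank_inter_le (M : Matroid α) (hX : X.Finite) (hY : Y.Finite) :
    mrank M (X ∪ Y) + mrank M (X ∩ Y) ≤ mrank M X + mrank M Y := by
  have h := M.eRk_inter_add_eRk_union_le X Y
  rw [← cast_mrank M (hX.inter_of_left Y), ← cast_mrank M (hX.union hY), ← cast_mrank M hX,
    ← cast_mrank M hY, add_comm] at h
  exact_mod_cast h

lemma mrank_contract_singleton_add (M : Matroid α) (hT : T.Finite) (hxT : x ∉ T) :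
    mrank (M ／ {x}) T + mrank M {x} = mrank M (insert x T) := by
  have h := M.eRk_contract_add_eRk (disjoint_singleton_right.2 hxT)
  rw [← cast_mrank _ hT, ← cast_mrank M (finite_singleton x), union_singleton,
    ← cast_mrank M (hT.insert x)] at h
  exact_mod_cast h

lemma exists_indep_union_ncard_eq_of_contract_indep (hX : X.Finite) (hxX : x ∉ X)
    (hI : (M ／ {x}).Indep I) (hIJX : I ∪ J ⊆ X) :
    ∃ I', M.Indep I' ∧ I' ∪ J ⊆ insert x X ∧
      (I' ∪ J).ncard = (I ∪ J).ncard + mrank M {x} := by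
  obtain ⟨K, hK⟩ := M.exists_isBasis' {x}
  have hKIJ : Disjoint (I ∪ J) K :=
    disjoint_of_subset_right hK.subset (disjoint_singleton_right.2 fun h ↦ hxX (hIJX h))
  refine ⟨I ∪ K, (hK.contract_indep_iff.1 hI).1, ?_, ?_⟩
  · rw [union_right_comm, insert_eq, union_comm {x}]
    exact union_subset_union hIJX hK.subset
  · rw [union_right_comm,
      ncard_union_eq hKIJ (hX.subset hIJX) ((finite_singleton x).subset hK.subset),
      hK.mrank_eq_ncard (finite_singleton x)]

lemma mrank_insert_union_add_mrank_inter_le (M : Matroid α) (hS : S.Finite) (hT : T.Finite)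
    (hxS : x ∉ S) (hxT : x ∉ T) :
    mrank M (insert x (S ∪ T)) + mrank M (S ∩ T) ≤
      mrank (M ／ {x}) S + mrank M {x} + mrank M T := by
  have h := mrank_union_add_mrank_inter_le M (hS.insert x) hT
  rwa [insert_union, insert_inter_of_notMem hxT, ← mrank_contract_singleton_add M hS hxS] at h

end mrank

section unionRankBound

variable {α : Type*} {M N : Matroid α} {I J S T X : Set α} {x : α}

noncomputable def unionRankBound (M N : Matroid α) (X T : Set α) : ℕ :=
  (X \ T).ncard + mrank M T + mrank N T

lemma ncard_union_le_unionRankBound (hX : X.Finite) (hI : M.Indep I) (hJ : N.Indep J)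
    (hIJX : I ∪ J ⊆ X) (hTX : T ⊆ X) : (I ∪ J).ncard ≤ unionRankBound M N X T := by
  have hT : T.Finite := hX.subset hTX
  calc (I ∪ J).ncard = ((I ∪ J) ∩ T).ncard + ((I ∪ J) \ T).ncard :=
        (ncard_inter_add_ncard_sdiff_eq_ncard _ _ (hX.subset hIJX)).symm
    _ ≤ (I ∩ T).ncard + (J ∩ T).ncard + (X \ T).ncard := by
        gcongr ?_ + ?_
        · rw [union_inter_distrib_right]
          exact ncard_union_le _ _
        · exact ncard_le_ncard (sdiff_subset_sdiff_left hIJX) hX.sdiff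
    _ ≤ mrank M T + mrank N T + (X \ T).ncard := by
        gcongr
        · exact (hI.subset inter_subset_left).ncard_le_mrank hT inter_subset_right
        · exact (hJ.subset inter_subset_left).ncard_le_mrank hT inter_subset_right
    _ = unionRankBound M N X T := by
        rw [unionRankBound]
        ring

lemma ncard_sdiff_union_add_ncard_sdiff_inter (hX : X.Finite) (S T : Set α) :
    (X \ (S ∪ T)).ncard + (X \ (S ∩ T)).ncard = (X \ S).ncard + (X \ T).ncard := by
  rw [← sdiff_inter_sdiff, sdiff_inter, add_comm,
    ncard_union_add_ncard_inter _ _ hX.sdiff hX.sdiff]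

lemma unionRankBound_insert_add_le (hX : X.Finite) (hxX : x ∉ X) (hSX : S ⊆ X) (hTX : T ⊆ X) :
    unionRankBound M N (insert x X) (insert x (S ∪ T)) + unionRankBound M N (insert x X) (S ∩ T)
      ≤ unionRankBound (M ／ {x}) N X S + mrank M {x}
        + (unionRankBound M (N ／ {x}) X T + mrank N {x}) + 1 := by
  have hS : S.Finite := hX.subset hSX
  have hT : T.Finite := hX.subset hTX
  have hxS : x ∉ S := fun h ↦ hxX (hSX h)
  have hxT : x ∉ T := fun h ↦ hxX (hTX h)
  have hA : insert x X \ insert x (S ∪ T) = X \ (S ∪ T) := by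
    rw [insert_sdiff_of_mem _ (mem_insert x _), sdiff_insert_of_notMem hxX]
  have hB : (insert x X \ (S ∩ T)).ncard = (X \ (S ∩ T)).ncard + 1 := by
    rw [insert_sdiff_of_notMem _ fun h ↦ hxS h.1,
      ncard_insert_of_notMem (fun h ↦ hxX h.1) hX.sdiff]
  have hcard := ncard_sdiff_union_add_ncard_sdiff_inter hX S T
  have hM := mrank_insert_union_add_mrank_inter_le M hS hT hxS hxT
  have hN := mrank_insert_union_add_mrank_inter_le N hT hS hxT hxS
  rw [union_comm, inter_comm] at hN
  simp only [unionRankBound, hA, hB]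
  omega

theorem exists_indep_union_ge_unionRankBound (M N : Matroid α) (hX : X.Finite) :
    ∃ I J T, M.Indep I ∧ N.Indep J ∧ I ∪ J ⊆ X ∧ T ⊆ X ∧
      unionRankBound M N X T ≤ (I ∪ J).ncard := by
  induction X, hX using Set.Finite.induction_on generalizing M N with
  | empty =>
    exact ⟨∅, ∅, ∅, M.empty_indep, N.empty_indep, by simp, subset_rfl,
      by simp [unionRankBound, mrank_empty]⟩
  | @insert x X hxX hX ih =>
    obtain ⟨I₁, J₁, S, hI₁, hJ₁, hIJ₁, hSX, hS⟩ := ih (M ／ {x}) N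
    obtain ⟨I₂, J₂, T, hI₂, hJ₂, hIJ₂, hTX, hT⟩ := ih M (N ／ {x})
    obtain ⟨I₁', hI₁', hIJ₁', hcard₁⟩ :=
      exists_indep_union_ncard_eq_of_contract_indep hX hxX hI₁ hIJ₁
    obtain ⟨J₂', hJ₂', hIJ₂', hcard₂⟩ :=
      exists_indep_union_ncard_eq_of_contract_indep hX hxX hJ₂ (union_comm I₂ J₂ ▸ hIJ₂)
    rw [union_comm J₂', union_comm J₂] at hcard₂
    rw [union_comm J₂'] at hIJ₂'
    set p := unionRankBound (M ／ {x}) N X S + mrank M {x}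
    set q := unionRankBound M (N ／ {x}) X T + mrank N {x}
    obtain ⟨I, J, hI, hJ, hIJ, hIJ_card⟩ :
        ∃ I J, M.Indep I ∧ N.Indep J ∧ I ∪ J ⊆ insert x X ∧
          max p q ≤ (I ∪ J).ncard := by
      rcases le_total p q with hpq | hpq
      · exact ⟨I₂, J₂', hI₂, hJ₂', hIJ₂', by omega⟩
      · exact ⟨I₁', J₁, hI₁', hJ₁, hIJ₁', by omega⟩
    obtain ⟨U, hUX, hU⟩ :
        ∃ U ⊆ insert x X, unionRankBound M N (insert x X) U ≤ max p q := by
      have hsum := unionRankBound_insert_add_le (M := M) (N := N) hX hxX hSX hTX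
      by_cases hA : unionRankBound M N (insert x X) (insert x (S ∪ T)) ≤ max p q
      · exact ⟨_, insert_subset_insert (union_subset hSX hTX), hA⟩
      · exact ⟨S ∩ T, (inter_subset_left.trans hSX).trans (subset_insert x X), by omega⟩
    exact ⟨I, J, U, hI, hJ, hIJ, hUX, hU.trans hIJ_card⟩

end unionRankBound

theorem matroid_union_rank_general {α : Type*} (M N P : Matroid α) [M.Finite]
    (hPI : ∀ I, P.Indep I ↔ ∃ I₁ I₂, M.Indep I₁ ∧ N.Indep I₂ ∧ I = I₁ ∪ I₂)
    (X : Set α) (hX : X ⊆ M.E) :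
    mrank P X = sInf {n | ∃ T ⊆ X, n = (X \ T).ncard + mrank M T + mrank N T} := by
  have hXf : X.Finite := M.ground_finite.subset hX
  apply le_antisymm
  · refine le_csInf ⟨_, ∅, empty_subset X, rfl⟩ ?_
    rintro _ ⟨T, hTX, rfl⟩
    obtain ⟨B, hB⟩ := P.exists_isBasis' X
    obtain ⟨I, J, hI, hJ, rfl⟩ := (hPI B).1 hB.indep
    rw [hB.mrank_eq_ncard hXf]
    exact ncard_union_le_unionRankBound hXf hI hJ hB.subset hTX
  · obtain ⟨I, J, T, hI, hJ, hIJX, hTX, hT⟩ := exists_indep_union_ge_unionRankBound M N hXf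
    have hIJ : P.Indep (I ∪ J) := (hPI _).2 ⟨I, J, hI, hJ, rfl⟩
    refine (Nat.sInf_le ?_).trans (hT.trans (hIJ.ncard_le_mrank hXf hIJX))
    exact ⟨T, hTX, rfl⟩

/-- The matroid union theorem of Nash-Williams. -/
theorem matroid_union_rank {α : Type*} (M N P : Matroid α) [M.Finite]
    (hNE : N.E = M.E) (hPE : P.E = M.E)
    (hPI : ∀ I, P.Indep I ↔ ∃ I₁ I₂, M.Indep I₁ ∧ N.Indep I₂ ∧ I = I₁ ∪ I₂)
    (X : Set α) (hX : X ⊆ M.E) :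
    mrank P X = sInf {n | ∃ T ⊆ X, n = (X \ T).ncard + mrank M T + mrank N T} :=
  matroid_union_rank_general M N P hPI X hX
end

section
/- Let G be a graph, M its cycle matroid, and N = (∨^k M)* the dual of the k-fold union of M. If X ⊆ E(G) is a flat of N, then every vertex of the subgraph of G induced by the edge set E(G) \ X has degree at least k+1 in that subgraph. -/
/-!
If `e₀ ∉ X` and `X` is a flat of `U✶`, some cocircuit of `U✶`, that is a circuit `K` of `U`,
contains `e₀` and avoids `X`. Were there at most `k` edges of `E \ X` at an end `v` of `e₀`,
`K` would be independent in `U`: cover `K \ {e₀}` by `k` forests, remove from them all edges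
at `v`, and give each of the at most `k` edges of `K` at `v` its own forest, in which it is a
pendant edge.
-/

open Set

namespace Matroid

variable {α : Type*} {M : Matroid α} {X : Set α} {e : α}

lemma exists_isCocircuit_of_notMem_closure (he : e ∈ M.E) (heX : e ∉ M.closure X) :
    ∃ K, M.IsCocircuit K ∧ e ∈ K ∧ Disjoint K (M.closure X) := by
  obtain ⟨I, hI⟩ := M.exists_isBasis' X
  rw [← hI.closure_eq_closure] at heX ⊢
  have heI : e ∉ I := notMem_subset (M.subset_closure I hI.indep.subset_ground) heX
  obtain ⟨B, hB, hIB⟩ := (hI.indep.insert_indep_iff.2 (.inl ⟨he, heX⟩)).exists_isBase_superset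
  have heB : e ∈ B := hIB (mem_insert e I)
  refine ⟨_, hB.compl_closure_sdiff_singleton_isCocircuit heB,
    ⟨he, hB.indep.notMem_closure_sdiff_of_mem heB⟩, disjoint_sdiff_left.mono_right ?_⟩
  exact M.closure_subset_closure (subset_sdiff_singleton ((subset_insert e I).trans hIB) heI)

end Matroid

namespace SimpleGraph

variable {V : Type*}

lemma isAcyclic_fromEdgeSet_insert_of_forall_notMem {S : Set (Sym2 V)} {v w : V}
    (hS : (fromEdgeSet S).IsAcyclic) (hv : ∀ e ∈ S, v ∉ e) :
    (fromEdgeSet (insert s(v, w) S)).IsAcyclic := by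
  rw [insert_eq, fromEdgeSet_union, sup_comm, ← edge, isAcyclic_sup_fromEdgeSet_iff]
  refine ⟨hS, fun ⟨p⟩ => ?_⟩
  by_cases hvw : v = w
  · exact .inl hvw
  have hadj := p.adj_snd (p.not_nil_of_ne hvw)
  exact absurd (Sym2.mem_mk_left _ _) (hv _ ((fromEdgeSet_adj _).1 hadj).1)

lemma exists_isAcyclic_cover_of_ncard_incident_le [Finite V] {k : ℕ}
    {F : Fin k → Set (Sym2 V)} (hF : ∀ i, (fromEdgeSet (F i)).IsAcyclic) {S : Set (Sym2 V)}
    {v : V} (hSF : ∀ e ∈ S, v ∉ e → e ∈ ⋃ i, F i) (hcard : {e ∈ S | v ∈ e}.ncard ≤ k) :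
    ∃ F' : Fin k → Set (Sym2 V), (∀ i, (fromEdgeSet (F' i)).IsAcyclic) ∧ S = ⋃ i, F' i := by
  set T := {e ∈ S | v ∈ e}
  let f : T ↪ Fin k := (Finite.equivFin T).toEmbedding.trans
    (Fin.castLEEmb (by rwa [Nat.card_coe_set_eq]))
  refine ⟨fun i => {e ∈ S ∩ F i | v ∉ e} ∪ Subtype.val '' (f ⁻¹' {i}), fun i => ?_, ?_⟩
  · have hbase : (fromEdgeSet {e ∈ S ∩ F i | v ∉ e}).IsAcyclic :=
      (hF i).anti (fromEdgeSet_mono fun e he => he.1.2)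
    dsimp only
    rcases ((subsingleton_singleton.preimage f.injective).image Subtype.val).eq_empty_or_singleton
      with hempty | ⟨a, ha⟩
    · rwa [hempty, union_empty]
    · have haT : a ∈ T := by
        obtain ⟨⟨b, hbT⟩, -, rfl⟩ := (ha ▸ mem_singleton a : a ∈ Subtype.val '' (f ⁻¹' {i}))
        exact hbT
      obtain ⟨w, rfl⟩ := Sym2.mem_iff_exists.1 haT.2
      rw [ha, union_singleton]
      exact isAcyclic_fromEdgeSet_insert_of_forall_notMem hbase fun e he => he.2
  · ext e
    refine ⟨fun heS => ?_, ?_⟩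
    · by_cases hve : v ∈ e
      · exact mem_iUnion.2 ⟨f ⟨e, heS, hve⟩, .inr ⟨⟨e, heS, hve⟩, rfl, rfl⟩⟩
      · obtain ⟨i, hi⟩ := mem_iUnion.1 (hSF e heS hve)
        exact mem_iUnion.2 ⟨i, .inl ⟨⟨heS, hi⟩, hve⟩⟩
    · simp only [mem_iUnion]
      rintro ⟨i, ⟨⟨heS, -⟩, -⟩ | ⟨⟨e, heT⟩, -, rfl⟩⟩
      exacts [heS, heT.1]

end SimpleGraph

theorem flat_complement_min_degree_general {V : Type*} [Fintype V] (G : SimpleGraph V) (k : ℕ)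
    (M : Matroid (Sym2 V))
    (hMI : ∀ X, M.Indep X ↔ X ⊆ G.edgeSet ∧ (SimpleGraph.fromEdgeSet X).IsAcyclic)
    (U : Matroid (Sym2 V)) (hUE : U.E = G.edgeSet)
    (hUI : ∀ X, U.Indep X ↔ ∃ F : Fin k → Set (Sym2 V), (∀ i, M.Indep (F i)) ∧ X = ⋃ i, F i)
    (X : Set (Sym2 V)) (hflat : U✶.IsFlat X) :
    ∀ v : V, (∃ e ∈ G.edgeSet \ X, v ∈ e) →
      k + 1 ≤ {e ∈ G.edgeSet \ X | v ∈ e}.ncard := by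
  rintro v ⟨e₀, ⟨he₀E, he₀X⟩, hve₀⟩
  by_contra! hdeg
  obtain ⟨K, hK, he₀K, hKX⟩ := Matroid.exists_isCocircuit_of_notMem_closure
    (by rwa [Matroid.dual_ground, hUE]) (hflat.closure.symm ▸ he₀X)
  rw [Matroid.dual_isCocircuit_iff] at hK
  rw [hflat.closure] at hKX
  have hKE : K ⊆ G.edgeSet \ X := subset_sdiff.2 ⟨hUE ▸ hK.subset_ground, hKX⟩
  have hKv : {e ∈ K | v ∈ e}.ncard ≤ k := Nat.le_of_lt_succ <|
    (ncard_le_ncard (t := {e ∈ G.edgeSet \ X | v ∈ e}) (fun e he => ⟨hKE he.1, he.2⟩)).trans_lt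
      hdeg
  obtain ⟨F, hF, hKF⟩ := (hUI _).1 (hK.sdiff_singleton_indep he₀K)
  obtain ⟨F', hF', rfl⟩ := SimpleGraph.exists_isAcyclic_cover_of_ncard_incident_le
    (fun i => ((hMI _).1 (hF i)).2)
    (fun e heK hve => hKF ▸ show e ∈ K \ {e₀} from ⟨heK, by rintro rfl; exact hve hve₀⟩) hKv
  exact hK.not_indep ((hUI _).2 ⟨F', fun i => (hMI _).2
    ⟨(subset_iUnion F' i).trans (hKE.trans sdiff_subset), hF' i⟩, rfl⟩)

theorem flat_complement_min_degree {V : Type*} [Fintype V] (G : SimpleGraph V) (k : ℕ)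
    (M : Matroid (Sym2 V)) (hME : M.E = G.edgeSet)
    (hMI : ∀ X, M.Indep X ↔ X ⊆ G.edgeSet ∧ (SimpleGraph.fromEdgeSet X).IsAcyclic)
    (U : Matroid (Sym2 V)) (hUE : U.E = G.edgeSet)
    (hUI : ∀ X, U.Indep X ↔ ∃ F : Fin k → Set (Sym2 V), (∀ i, M.Indep (F i)) ∧ X = ⋃ i, F i)
    (X : Set (Sym2 V)) (hX : X ⊆ G.edgeSet) (hflat : U✶.IsFlat X) :
    ∀ v : V, (∃ e ∈ G.edgeSet \ X, v ∈ e) →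
      k + 1 ≤ {e ∈ G.edgeSet \ X | v ∈ e}.ncard :=
  flat_complement_min_degree_general G k M hMI U hUE hUI X hflat
end

section
/- Let H be a graph with minimum degree δ ≥ 1, and let D be a set of paths of length 2 in H such that every edge of H is incident with (shares a vertex with) some path in D. Let H* be the union of the paths in D, with n* vertices and m* edges, and let H have n vertices and m edges. Then m - m* ≥ δ(n - n*). -/
/-!
Let `S` and `F` be the vertex and edge sets of `H*`. Domination says exactly that `S` is a vertex
cover of `H`, so no edge joins two vertices outside `S` and their incidence sets are pairwise
disjoint; since every edge of `H*` has both ends in `S`, these incidence sets also avoid `F`.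
Each of the `n - n*` vertices outside `S` thus contributes at least `δ` private edges of
`E(H) \ F`, which has `m - m*` elements.
-/

namespace SimpleGraph

variable {V : Type*} {G : SimpleGraph V}

theorem ncard_incidenceSet (v : V) : (G.incidenceSet v).ncard = (G.neighborSet v).ncard := by
  classical exact Set.ncard_congr' (G.incidenceSetEquivNeighborSet v)

theorem IsIndepSet.pairwiseDisjoint_incidenceSet {s : Set V} (hs : G.IsIndepSet s) :
    s.PairwiseDisjoint G.incidenceSet := fun _ ha _ hb hab =>
  Set.disjoint_iff_inter_eq_empty.2 <|
    G.incidenceSet_inter_incidenceSet_of_not_adj (hs ha hb hab) hab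

theorem IsIndepSet.mul_ncard_le_ncard_biUnion_incidenceSet [Finite V] {s : Set V} {δ : ℕ}
    (hs : G.IsIndepSet s) (hdeg : ∀ v ∈ s, δ ≤ (G.neighborSet v).ncard) :
    δ * s.ncard ≤ (⋃ v ∈ s, G.incidenceSet v).ncard := by
  rw [s.toFinite.ncard_biUnion (fun _ _ => Set.toFinite _) hs.pairwiseDisjoint_incidenceSet,
    finsum_mem_eq_finite_toFinset_sum _ s.toFinite, Set.ncard_eq_toFinset_card s, mul_comm,
    ← smul_eq_mul]
  refine Finset.card_nsmul_le_sum _ _ _ fun v hv => ?_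
  rw [ncard_incidenceSet]
  exact hdeg v (s.toFinite.mem_toFinset.1 hv)

theorem biUnion_incidenceSet_compl_subset_edgeSet_diff {S : Set V} {F : Set (Sym2 V)}
    (hF : ∀ e ∈ F, ∀ v ∈ e, v ∈ S) : ⋃ v ∈ Sᶜ, G.incidenceSet v ⊆ G.edgeSet \ F := by
  simp only [Set.iUnion_subset_iff]
  exact fun v hv e ⟨he, hve⟩ => ⟨he, fun heF => hv (hF e heF v hve)⟩

theorem IsVertexCover.mul_ncard_compl_le_ncard_edgeSet_diff [Finite V] {S : Set V}
    {F : Set (Sym2 V)} {δ : ℕ} (hS : G.IsVertexCover S) (hdeg : ∀ v, δ ≤ (G.neighborSet v).ncard)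
    (hF : ∀ e ∈ F, ∀ v ∈ e, v ∈ S) : δ * Sᶜ.ncard ≤ (G.edgeSet \ F).ncard :=
  ((isIndepSet_compl_iff_isVertexCover.2 hS).mul_ncard_le_ncard_biUnion_incidenceSet
    fun v _ => hdeg v).trans
    (Set.ncard_le_ncard (biUnion_incidenceSet_compl_subset_edgeSet_diff hF))

end SimpleGraph

-- The vertex and edge sets of `H*`, the union of the 2-paths in `D`.
def twoPathVertices {V : Type*} (D : Set (V × V × V)) : Set V :=
  {v | ∃ p ∈ D, v = p.1 ∨ v = p.2.1 ∨ v = p.2.2}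

def twoPathEdges {V : Type*} (D : Set (V × V × V)) : Set (Sym2 V) :=
  {e | ∃ p ∈ D, e = s(p.1, p.2.1) ∨ e = s(p.2.1, p.2.2)}

section TwoPaths

variable {V : Type*} {H : SimpleGraph V} {D : Set (V × V × V)}

theorem twoPathEdges_subset_edgeSet (hpath : ∀ p ∈ D, H.Adj p.1 p.2.1 ∧ H.Adj p.2.1 p.2.2) :
    twoPathEdges D ⊆ H.edgeSet := by
  rintro e ⟨p, hp, rfl | rfl⟩
  exacts [(hpath p hp).1, (hpath p hp).2]

theorem mem_twoPathVertices_of_mem_twoPathEdges {e : Sym2 V} (he : e ∈ twoPathEdges D) {v : V}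
    (hv : v ∈ e) : v ∈ twoPathVertices D := by
  obtain ⟨p, hp, rfl | rfl⟩ := he <;> rcases Sym2.mem_iff.1 hv with rfl | rfl
  exacts [⟨p, hp, .inl rfl⟩, ⟨p, hp, .inr (.inl rfl)⟩, ⟨p, hp, .inr (.inl rfl)⟩,
    ⟨p, hp, .inr (.inr rfl)⟩]

theorem isVertexCover_twoPathVertices
    (hdom : ∀ e ∈ H.edgeSet, ∃ p ∈ D, ∃ v, v ∈ e ∧ (v = p.1 ∨ v = p.2.1 ∨ v = p.2.2)) :
    H.IsVertexCover (twoPathVertices D) := fun a b hab => by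
  obtain ⟨p, hp, v, hv, hvp⟩ := hdom s(a, b) hab
  rcases Sym2.mem_iff.1 hv with rfl | rfl
  exacts [.inl ⟨p, hp, hvp⟩, .inr ⟨p, hp, hvp⟩]

end TwoPaths

theorem dominating_two_paths_bound_general {V : Type*} [Fintype V] (H : SimpleGraph V) (δ : ℕ)
    (hdeg : ∀ v : V, δ ≤ (H.neighborSet v).ncard)
    (D : Set (V × V × V))
    (hpath : ∀ p ∈ D, H.Adj p.1 p.2.1 ∧ H.Adj p.2.1 p.2.2 ∧ p.1 ≠ p.2.2)
    (hdom : ∀ e ∈ H.edgeSet, ∃ p ∈ D, ∃ v, v ∈ e ∧ (v = p.1 ∨ v = p.2.1 ∨ v = p.2.2)) :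
    (H.edgeSet.ncard : ℤ) -
        ({e | ∃ p ∈ D, e = s(p.1, p.2.1) ∨ e = s(p.2.1, p.2.2)} : Set (Sym2 V)).ncard
      ≥ δ * ((Fintype.card V : ℤ) -
        ({v | ∃ p ∈ D, v = p.1 ∨ v = p.2.1 ∨ v = p.2.2} : Set V).ncard) := by
  change δ * ((Fintype.card V : ℤ) - (twoPathVertices D).ncard) ≤
    H.edgeSet.ncard - (twoPathEdges D).ncard
  have hedges := twoPathEdges_subset_edgeSet fun p hp => ⟨(hpath p hp).1, (hpath p hp).2.1⟩
  have hbound := (isVertexCover_twoPathVertices hdom).mul_ncard_compl_le_ncard_edgeSet_diff hdeg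
    fun _ he _ => mem_twoPathVertices_of_mem_twoPathEdges he
  have hcompl : (twoPathVertices D).ncard + (twoPathVertices D)ᶜ.ncard = Fintype.card V := by
    rw [Set.ncard_add_ncard_compl, Nat.card_eq_fintype_card]
  rw [Set.ncard_sdiff hedges] at hbound
  zify [Set.ncard_le_ncard hedges] at hbound
  rw [← hcompl]
  push_cast
  linarith

theorem dominating_two_paths_bound {V : Type*} [Fintype V] (H : SimpleGraph V) (δ : ℕ)
    (hδ : 1 ≤ δ) (hdeg : ∀ v : V, δ ≤ (H.neighborSet v).ncard)
    (D : Set (V × V × V))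
    (hpath : ∀ p ∈ D, H.Adj p.1 p.2.1 ∧ H.Adj p.2.1 p.2.2 ∧ p.1 ≠ p.2.2)
    (hdom : ∀ e ∈ H.edgeSet, ∃ p ∈ D, ∃ v, v ∈ e ∧ (v = p.1 ∨ v = p.2.1 ∨ v = p.2.2)) :
    (H.edgeSet.ncard : ℤ) -
        ({e | ∃ p ∈ D, e = s(p.1, p.2.1) ∨ e = s(p.2.1, p.2.2)} : Set (Sym2 V)).ncard
      ≥ δ * ((Fintype.card V : ℤ) -
        ({v | ∃ p ∈ D, v = p.1 ∨ v = p.2.1 ∨ v = p.2.2} : Set V).ncard) :=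
  dominating_two_paths_bound_general H δ hdeg D hpath hdom
end

section
/- Let k ≥ 1 be an integer, ε = 1/(3k+2), and let H be a graph with fractional arboricity at most k + ε and minimum degree at least k+1. Then every set D of 2-paths dominating E(H) satisfies |D| ≥ ε·|V(H)|. -/
/-- The fractional arboricity of a graph `G`: the maximum over all subgraphs `H` with at
least two vertices of `|E(H)| / (|V(H)| - 1)`. -/
noncomputable def fracArboricity {V : Type*} [Fintype V] (G : SimpleGraph V) : ℝ :=
  sSup {r : ℝ | ∃ H : G.Subgraph, 2 ≤ H.verts.ncard ∧
    r = (H.edgeSet.ncard : ℝ) / ((H.verts.ncard : ℝ) - 1)}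

/-!
Let `n = |V|` and let `S` be the set of vertices covered by the 2-paths of `D`, so `|S| ≤ 3|D|`.
Every edge meets `S`, hence the vertices outside `S` are pairwise non-adjacent and send at least
`(k + 1)(n - |S|)` distinct edges into `S`. Inside `S`, view each 2-path as a star centred at its
middle vertex: adding the stars one at a time, every newly covered vertex other than the centre
brings a new edge of `H[S]`, so `H[S]` has at least `|S| - |D|` edges. Fractional arboricity
bounds the number of edges by `(k + ε)(n - 1)`, which yields `(1 - ε) n ≤ k |S| + |D| ≤
(3k + 1) |D|`, and `1 - ε = (3k + 1) ε`.
-/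

open Finset

namespace SimpleGraph

variable {V : Type*} (G : SimpleGraph V)

theorem ncard_neighborSet_eq_degree (v : V) [Fintype (G.neighborSet v)] :
    (G.neighborSet v).ncard = G.degree v := by
  rw [Set.ncard_eq_toFinset_card', ← neighborFinset_def, card_neighborFinset_eq_degree]

variable [Fintype V] [DecidableRel G.Adj]

theorem card_edgeFinset_le_fracArboricity_mul (hV : 2 ≤ Fintype.card V) :
    (#G.edgeFinset : ℝ) ≤ fracArboricity G * (Fintype.card V - 1) := by
  have hpos : (0 : ℝ) < Fintype.card V - 1 := by
    have : (2 : ℝ) ≤ Fintype.card V := by exact_mod_cast hV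
    linarith
  rw [← div_le_iff₀ hpos]
  refine le_csSup ⟨#(univ : Finset (Sym2 V)), ?_⟩ ⟨⊤, ?_, ?_⟩
  · rintro r ⟨K, hK, rfl⟩
    have hden : (1 : ℝ) ≤ K.verts.ncard - 1 := by
      have : (2 : ℝ) ≤ K.verts.ncard := by exact_mod_cast hK
      linarith
    calc (K.edgeSet.ncard : ℝ) / (K.verts.ncard - 1) ≤ K.edgeSet.ncard :=
          div_le_self (Nat.cast_nonneg _) hden
      _ ≤ #(univ : Finset (Sym2 V)) := by
          rw [card_univ, ← Nat.card_eq_fintype_card, ← Set.ncard_univ]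
          exact_mod_cast Set.ncard_le_ncard (Set.subset_univ _)
  · simpa [Set.ncard_univ] using hV
  · rw [Subgraph.edgeSet_top, Subgraph.verts_top, ← coe_edgeFinset, Set.ncard_coe_finset,
      Set.ncard_univ, Nat.card_eq_fintype_card]

variable [DecidableEq V]

theorem sum_degree_compl_le_card_edgeFinset_sdiff_sym2 (S : Finset V)
    (hS : ∀ e ∈ G.edgeSet, ∃ v ∈ e, v ∈ S) :
    ∑ v ∈ Sᶜ, G.degree v ≤ #(G.edgeFinset \ S.sym2) := by
  have hdisj : ((Sᶜ : Finset V) : Set V).PairwiseDisjoint fun v => G.incidenceFinset v := by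
    intro x hx y hy hxy
    refine Finset.disjoint_left.mpr fun e hex hey => ?_
    have hxy' := G.adj_of_mem_incidenceSet hxy
      ((G.mem_incidenceFinset _ _).mp hex) ((G.mem_incidenceFinset _ _).mp hey)
    obtain ⟨v, hv, hvS⟩ := hS s(x, y) hxy'
    rcases Sym2.mem_iff.mp hv with rfl | rfl
    · exact (mem_compl.mp hx) hvS
    · exact (mem_compl.mp hy) hvS
  simp_rw [← card_incidenceFinset_eq_degree]
  rw [← card_biUnion hdisj]
  refine card_le_card fun e he => ?_
  obtain ⟨v, hv, hve⟩ := mem_biUnion.mp he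
  obtain ⟨he, hve⟩ := (G.mem_incidenceFinset _ _).mp hve
  exact mem_sdiff.mpr
    ⟨G.mem_edgeFinset.mpr he, fun h => mem_compl.mp hv (mem_sym2_iff.mp h v hve)⟩

theorem card_edgeFinset_inter_sym2_add_mul_le (S : Finset V)
    (hS : ∀ e ∈ G.edgeSet, ∃ v ∈ e, v ∈ S) (δ : ℕ) (hδ : ∀ v, δ ≤ G.degree v) :
    #(G.edgeFinset ∩ S.sym2) + (Fintype.card V - #S) * δ ≤ #G.edgeFinset := by
  have hout := (card_nsmul_le_sum Sᶜ _ δ fun v _ => hδ v).trans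
    (G.sum_degree_compl_le_card_edgeFinset_sdiff_sym2 S hS)
  rw [card_compl, smul_eq_mul] at hout
  rw [← card_inter_add_card_sdiff G.edgeFinset S.sym2]
  omega

theorem card_insert_union_add_card_edgeFinset_inter_sym2_le (S N : Finset V) (b : V)
    (hN : ∀ v ∈ N, G.Adj b v) :
    #(insert b N ∪ S) + #(G.edgeFinset ∩ S.sym2) ≤
      #S + #(G.edgeFinset ∩ (insert b N ∪ S).sym2) + 1 := by
  have hverts : #(insert b N ∪ S) ≤ #S + #(N \ S) + 1 := by
    calc #(insert b N ∪ S) = #(insert b (N \ S ∪ S)) := by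
          rw [sdiff_union_self_eq_union, insert_union]
      _ ≤ #(N \ S ∪ S) + 1 := card_insert_le _ _
      _ ≤ #S + #(N \ S) + 1 := by grw [card_union_le]; omega
  have hedges : #(G.edgeFinset ∩ S.sym2) + #(N \ S) ≤
      #(G.edgeFinset ∩ (insert b N ∪ S).sym2) := by
    rw [← card_image_of_injective _ (Sym2.mkEmbedding b).injective,
      ← card_union_of_disjoint]
    · refine card_le_card (union_subset ?_ fun e he => ?_)
      · exact inter_subset_inter_left (sym2_mono subset_union_right)
      · obtain ⟨v, hv, rfl⟩ := mem_image.mp he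
        have hvN := (mem_sdiff.mp hv).1
        refine mem_inter.mpr ⟨G.mem_edgeFinset.mpr (hN v hvN), mk_mem_sym2_iff.mpr ⟨?_, ?_⟩⟩
        · exact mem_union_left _ (mem_insert_self _ _)
        · exact mem_union_left _ (mem_insert_of_mem hvN)
    · refine Finset.disjoint_left.mpr fun e he he' => ?_
      obtain ⟨v, hv, rfl⟩ := mem_image.mp he'
      exact (mem_sdiff.mp hv).2 (mk_mem_sym2_iff.mp (mem_inter.mp he).2).2
  omega

theorem card_biUnion_stars_le {ι : Type*} [DecidableEq ι] (D : Finset ι) (c : ι → V)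
    (L : ι → Finset V) (hadj : ∀ i ∈ D, ∀ v ∈ L i, G.Adj (c i) v) :
    #(D.biUnion fun i => insert (c i) (L i)) ≤
      #(G.edgeFinset ∩ (D.biUnion fun i => insert (c i) (L i)).sym2) + #D := by
  induction D using Finset.induction_on with
  | empty => simp
  | @insert i D hi ih =>
    have hstep := G.card_insert_union_add_card_edgeFinset_inter_sym2_le
      (D.biUnion fun i => insert (c i) (L i)) (L i) (c i) (hadj i (mem_insert_self _ _))
    have hD := ih fun j hj => hadj j (mem_insert_of_mem hj)
    rw [biUnion_insert, card_insert_of_notMem hi]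
    omega

end SimpleGraph

theorem eps_mul_le_of_edge_count {k ε n s d : ℝ} (hk : 0 ≤ k) (hε : ε = 1 / (3 * k + 2))
    (hedges : (s - d) + (n - s) * (k + 1) ≤ (k + ε) * (n - 1)) (hs : s ≤ 3 * d) :
    ε * n ≤ d := by
  have hεk : ε * (3 * k + 1) = 1 - ε := by rw [hε]; field_simp; ring
  have hlin : (1 - ε) * n ≤ k * s + d := by nlinarith
  have hks : k * s ≤ k * (3 * d) := mul_le_mul_of_nonneg_left hs hk
  have hscale : (3 * k + 1) * (ε * n) = (1 - ε) * n := by rw [← hεk]; ring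
  refine le_of_mul_le_mul_left ?_ (by positivity : 0 < 3 * k + 1)
  linarith

theorem dominating_two_paths_lower_bound_general {V : Type*} [Fintype V] (H : SimpleGraph V)
    (k : ℕ) (ε : ℝ) (hε : ε = 1 / (3 * k + 2))
    (hfa : fracArboricity H ≤ k + ε)
    (hdeg : ∀ v : V, k + 1 ≤ (H.neighborSet v).ncard)
    (D : Finset (V × V × V))
    (hpath : ∀ p ∈ D, H.Adj p.1 p.2.1 ∧ H.Adj p.2.1 p.2.2 ∧ p.1 ≠ p.2.2)
    (hdom : ∀ e ∈ H.edgeSet, ∃ p ∈ D, ∃ v, v ∈ e ∧ (v = p.1 ∨ v = p.2.1 ∨ v = p.2.2)) :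
    ε * (Fintype.card V : ℝ) ≤ (D.card : ℝ) := by
  classical
  rcases isEmpty_or_nonempty V with hV | ⟨⟨u⟩⟩
  · simp
  simp only [H.ncard_neighborSet_eq_degree] at hdeg
  set S := D.biUnion fun p => insert p.2.1 {p.1, p.2.2}
  have hcover : ∀ e ∈ H.edgeSet, ∃ v ∈ e, v ∈ S := fun e he => by
    obtain ⟨p, hp, v, hv, hvp⟩ := hdom e he
    exact ⟨v, hv, mem_biUnion.mpr ⟨p, hp, by simp only [mem_insert, mem_singleton]; tauto⟩⟩
  have hS3 : #S ≤ #D * 3 := card_biUnion_le_card_mul _ _ _ fun _ _ => card_le_three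
  have hinside : #S ≤ #(H.edgeFinset ∩ S.sym2) + #D :=
    H.card_biUnion_stars_le D (fun p => p.2.1) (fun p => {p.1, p.2.2}) fun p hp v hv => by
      rcases mem_insert.mp hv with rfl | hv
      · exact (hpath p hp).1.symm
      · exact mem_singleton.mp hv ▸ (hpath p hp).2.1
  have hlower : #S + (Fintype.card V - #S) * (k + 1) ≤ #H.edgeFinset + #D := by
    have := H.card_edgeFinset_inter_sym2_add_mul_le S hcover (k + 1) hdeg
    omega
  obtain ⟨w, huw⟩ := (H.degree_pos_iff_exists_adj u).mp (by have := hdeg u; omega)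
  have hcard : 2 ≤ Fintype.card V := Fintype.one_lt_card_iff.mpr ⟨u, w, huw.ne⟩
  have hcard' : (1 : ℝ) ≤ Fintype.card V := by exact_mod_cast hcard.trans' one_le_two
  have hupper := (H.card_edgeFinset_le_fracArboricity_mul hcard).trans
    (mul_le_mul_of_nonneg_right hfa (sub_nonneg.mpr hcard'))
  refine eps_mul_le_of_edge_count (s := #S) (Nat.cast_nonneg k) hε ?_ (by norm_cast; omega)
  have hlower' : ((#S + (Fintype.card V - #S) * (k + 1) : ℕ) : ℝ) ≤ #H.edgeFinset + #D := by
    exact_mod_cast hlower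
  push_cast [Nat.cast_sub (card_le_univ S)] at hlower'
  linarith

theorem dominating_two_paths_lower_bound {V : Type*} [Fintype V] (H : SimpleGraph V)
    (k : ℕ) (hk : 1 ≤ k) (ε : ℝ) (hε : ε = 1 / (3 * k + 2))
    (hfa : fracArboricity H ≤ k + ε)
    (hdeg : ∀ v : V, k + 1 ≤ (H.neighborSet v).ncard)
    (D : Finset (V × V × V))
    (hpath : ∀ p ∈ D, H.Adj p.1 p.2.1 ∧ H.Adj p.2.1 p.2.2 ∧ p.1 ≠ p.2.2)
    (hdom : ∀ e ∈ H.edgeSet, ∃ p ∈ D, ∃ v, v ∈ e ∧ (v = p.1 ∨ v = p.2.1 ∨ v = p.2.2)) :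
    ε * (Fintype.card V : ℝ) ≤ (D.card : ℝ) :=
  dominating_two_paths_lower_bound_general H k ε hε hfa hdeg D hpath hdom
end
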